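/- arXiv:1510.05376 — 3 statements merged into one kernel-verified Lean document; each statement's English description precedes it below -/
import Mathlib

section
/- Let k ≥ 2 be an integer and ℓ > k a prime. Suppose there exist integers n, m, d with m ≠ 0, d ≥ 1, gcd(n, d) = 1, and n(n + d^ℓ)(n + 2d^ℓ)⋯(n + (k−1)d^ℓ) = m^ℓ. Let p be a prime with k/2 < p ≤ k. Then there exist nonzero integers a, b, c, u, v, w with a·u^ℓ + b·v^ℓ + c·w^ℓ = 0 such that: a, b, c are ℓ-th-power-free; every prime divisor of a·b·c is at most k; p ∤ a·b·c; and p divides exactly one of u, v, w. -/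
/-- An integer is `l`-th-power-free if it is divisible by no `l`-th power of a prime. -/
def PowFree (l : ℕ) (a : ℤ) : Prop := ∀ q : ℕ, q.Prime → ¬ ((q : ℤ) ^ l ∣ a)

private lemma dvd_nat_iff (q : ℕ) (z : ℤ) : (q:ℤ) ∣ z ↔ q ∣ z.natAbs := by
  rw [← Int.natAbs_dvd_natAbs, Int.natAbs_natCast]

private lemma dvd_pow_nat_iff (q e : ℕ) (z : ℤ) : (q:ℤ) ^ e ∣ z ↔ q ^ e ∣ z.natAbs := by
  rw [← Int.natAbs_dvd_natAbs, Int.natAbs_pow, Int.natAbs_natCast]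

private lemma powfree_small {l : ℕ} (c : ℤ) (hc : c ≠ 0) (h : c.natAbs < 2 ^ l) :
    PowFree l c := by
  intro q hq hdvd
  rw [dvd_pow_nat_iff] at hdvd
  have h1 : q ^ l ≤ c.natAbs := Nat.le_of_dvd (by simpa using hc) hdvd
  have h2 : 2 ^ l ≤ q ^ l := Nat.pow_le_pow_left hq.two_le l
  omega

private lemma not_dvd_small {p : ℕ} (c : ℤ) (hc : c ≠ 0) (h : c.natAbs < p) :
    ¬ (p:ℤ) ∣ c := by
  intro hdvd
  rw [dvd_nat_iff] at hdvd
  have := Nat.le_of_dvd (by simpa using hc) hdvd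
  omega

private lemma decomp_aux (l : ℕ) (hl : 2 ≤ l) :
    ∀ N : ℕ, ∀ z : ℤ, z.natAbs ≤ N → z ≠ 0 →
    ∃ a t : ℤ, 0 < t ∧ z = a * t ^ l ∧ PowFree l a ∧
      (∀ q : ℕ, q.Prime → (q:ℤ) ^ l ∣ z → (q:ℤ) ∣ t) ∧
      (∀ q : ℕ, q.Prime → (q:ℤ) ∣ a → ¬ (l ∣ z.natAbs.factorization q)) := by
  intro N
  induction N with
  | zero =>
    intro z hN hz
    exact absurd (Int.natAbs_eq_zero.mp (Nat.le_zero.mp hN)) hz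
  | succ N ih =>
    intro z hN hz
    by_cases hex : ∃ q : ℕ, q.Prime ∧ (q:ℤ) ^ l ∣ z
    · obtain ⟨q, hq, hdvd⟩ := hex
      obtain ⟨z', hz'⟩ := hdvd
      have hz'0 : z' ≠ 0 := by rintro rfl; simp at hz'; exact hz hz'
      have hql : 1 < q ^ l := Nat.one_lt_pow (by omega) hq.two_le
      have habs : z.natAbs = q ^ l * z'.natAbs := by
        rw [hz', Int.natAbs_mul, Int.natAbs_pow, Int.natAbs_natCast]
      have hlt : z'.natAbs ≤ N := by
        have h1 : 1 ≤ z'.natAbs := by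
          have := Int.natAbs_eq_zero.not.mpr hz'0; omega
        nlinarith
      obtain ⟨a, t, ht, heq, hPF, hQ, hP⟩ := ih z' hlt hz'0
      refine ⟨a, q * t, mul_pos (by exact_mod_cast hq.pos) ht, by rw [hz', heq]; ring, hPF, ?_, ?_⟩
      · intro r hr hrd
        by_cases hrq : r = q
        · subst hrq; exact Dvd.intro t rfl
        · have hcop : IsCoprime (r:ℤ) (q:ℤ) := by
            rw [Int.isCoprime_iff_gcd_eq_one]
            simpa [Int.gcd] using (Nat.coprime_primes hr hq).mpr hrq
          have : (r:ℤ) ^ l ∣ z' :=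
            (hcop.pow).dvd_of_dvd_mul_left (by rwa [← hz'])
          exact (hQ r hr this).mul_left q
      · intro r hr hra hldvd
        have hfac : z.natAbs.factorization r
            = (q ^ l).factorization r + z'.natAbs.factorization r := by
          rw [habs, Nat.factorization_mul (by positivity) (by simpa using hz'0)]
          simp
        have hfq : (q ^ l).factorization r = if q = r then l else 0 := by
          rw [hq.factorization_pow]
          simp [Finsupp.single_apply]
        have : l ∣ z'.natAbs.factorization r := by
          rcases eq_or_ne q r with h | h
          · rw [hfq, if_pos h] at hfac
            rw [hfac] at hldvd
            exact (Nat.dvd_add_right (dvd_refl l)).mp hldvd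
          · rw [hfq, if_neg h, Nat.zero_add] at hfac
            rwa [hfac] at hldvd
        exact hP r hr hra this
    · push_neg at hex
      refine ⟨z, 1, one_pos, by ring, fun q hq => hex q hq, ?_, ?_⟩
      · intro q hq hdvd
        exact absurd hdvd (hex q hq)
      · intro q hq hqz hldvd
        have h1 : 0 < z.natAbs.factorization q :=
          hq.factorization_pos_of_dvd (by simpa using hz) ((dvd_nat_iff q z).mp hqz)
        have h2 : l ≤ z.natAbs.factorization q := Nat.le_of_dvd h1 hldvd
        have : q ^ l ∣ z.natAbs :=
          (Nat.Prime.pow_dvd_iff_le_factorization hq (by simpa using hz)).mpr h2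
        exact hex q hq ((dvd_pow_nat_iff q l z).mpr this)

private lemma decomp (l : ℕ) (hl : 2 ≤ l) (z : ℤ) (hz : z ≠ 0) :
    ∃ a t : ℤ, 0 < t ∧ z = a * t ^ l ∧ PowFree l a ∧
      (∀ q : ℕ, q.Prime → (q:ℤ) ^ l ∣ z → (q:ℤ) ∣ t) ∧
      (∀ q : ℕ, q.Prime → (q:ℤ) ∣ a → ¬ (l ∣ z.natAbs.factorization q)) :=
  decomp_aux l hl z.natAbs z le_rfl hz

theorem stmt_12 (k : ℕ) (hk : 2 ≤ k) (l : ℕ) (hl : l.Prime) (hkl : k < l)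
    (n m d : ℤ) (hm : m ≠ 0) (hd : 1 ≤ d) (hcop : IsCoprime n d)
    (hprod : ∏ i ∈ Finset.range k, (n + (i : ℤ) * d ^ l) = m ^ l)
    (p : ℕ) (hp : p.Prime) (hp1 : k < 2 * p) (hp2 : p ≤ k) :
    ∃ a b c u v w : ℤ,
      a ≠ 0 ∧ b ≠ 0 ∧ c ≠ 0 ∧ u ≠ 0 ∧ v ≠ 0 ∧ w ≠ 0 ∧
      a * u ^ l + b * v ^ l + c * w ^ l = 0 ∧
      PowFree l a ∧ PowFree l b ∧ PowFree l c ∧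
      (∀ q : ℕ, q.Prime → (q : ℤ) ∣ a * b * c → q ≤ k) ∧
      ¬ (p : ℤ) ∣ a * b * c ∧
      (((p : ℤ) ∣ u ∧ ¬ (p : ℤ) ∣ v ∧ ¬ (p : ℤ) ∣ w) ∨
       (¬ (p : ℤ) ∣ u ∧ (p : ℤ) ∣ v ∧ ¬ (p : ℤ) ∣ w) ∨
       (¬ (p : ℤ) ∣ u ∧ ¬ (p : ℤ) ∣ v ∧ (p : ℤ) ∣ w)) := by
  classical
  have hl2 : 2 ≤ l := hl.two_le
  have hd0 : d ≠ 0 := by omega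
  set F : ℕ → ℤ := fun i => n + (i:ℤ) * d ^ l with hFdef
  have hprod' : ∏ i ∈ Finset.range k, F i = m ^ l := hprod
  have hFne : ∀ i, i < k → F i ≠ 0 := by
    intro i hi h0
    apply pow_ne_zero l hm
    rw [← hprod']
    exact Finset.prod_eq_zero (Finset.mem_range.mpr hi) h0
  have hqd : ∀ q : ℕ, q.Prime → ∀ i : ℕ, (q:ℤ) ∣ F i → ¬ (q:ℤ) ∣ d := by
    intro q hq i hFi hdq
    have hqn : (q:ℤ) ∣ n := by
      have h1 : (q:ℤ) ∣ (i:ℤ) * d ^ l := Dvd.dvd.mul_left (dvd_pow hdq (by omega)) _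
      have h2 : F i - (i:ℤ) * d ^ l = n := by simp [hFdef]
      have h3 := dvd_sub hFi h1
      rwa [h2] at h3
    obtain ⟨x, y, hxy⟩ := hcop
    have hq1 : (q:ℤ) ∣ 1 := by
      rw [← hxy]; exact dvd_add (hqn.mul_left x) (hdq.mul_left y)
    have h4 := Int.le_of_dvd one_pos hq1
    have h5 := hq.two_le
    omega
  have hcong : ∀ q : ℕ, q.Prime → ∀ i j : ℕ, i < j → (q:ℤ) ∣ F i → (q:ℤ) ∣ F j →
      (q:ℤ) ∣ ((j:ℤ) - (i:ℤ)) := by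
    intro q hq i j hij hFi hFj
    have h1 : (q:ℤ) ∣ ((j:ℤ) - (i:ℤ)) * d ^ l := by
      have h2 : F j - F i = ((j:ℤ) - (i:ℤ)) * d ^ l := by simp only [hFdef]; ring
      rw [← h2]; exact dvd_sub hFj hFi
    rcases (Nat.prime_iff_prime_int.mp hq).dvd_mul.mp h1 with h | h
    · exact h
    · exact absurd ((Nat.prime_iff_prime_int.mp hq).dvd_of_dvd_pow h) (hqd q hq i hFi)
  have huniq : ∀ q : ℕ, q.Prime → k < q → ∀ i j : ℕ, i < k → j < k →
      (q:ℤ) ∣ F i → (q:ℤ) ∣ F j → i = j := by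
    intro q hq hkq i j hi hj hFi hFj
    have key : ∀ i j : ℕ, i < j → j < k → (q:ℤ) ∣ F i → (q:ℤ) ∣ F j → False := by
      intro i j hij hjk hFi hFj
      have h := hcong q hq i j hij hFi hFj
      have hle : (q:ℤ) ≤ (j:ℤ) - i := Int.le_of_dvd (by omega) h
      omega
    rcases Nat.lt_trichotomy i j with h | h | h
    · exact (key i j h hj hFi hFj).elim
    · exact h
    · exact (key j i h hi hFj hFi).elim
  have hVsum : ∀ q : ℕ, ∑ i ∈ Finset.range k, (F i).natAbs.factorization q
      = l * m.natAbs.factorization q := by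
    intro q
    have h1 : (∏ i ∈ Finset.range k, F i).natAbs = ∏ i ∈ Finset.range k, (F i).natAbs :=
      map_prod Int.natAbsHom F (Finset.range k)
    have h2 : (∏ i ∈ Finset.range k, (F i).natAbs).factorization
        = ∑ i ∈ Finset.range k, ((F i).natAbs).factorization :=
      Nat.factorization_prod (fun i hi => by simpa using hFne i (Finset.mem_range.mp hi))
    have h3 : (∏ i ∈ Finset.range k, F i).natAbs = (m.natAbs) ^ l := by
      rw [hprod', Int.natAbs_pow]
    calc ∑ i ∈ Finset.range k, ((F i).natAbs).factorization q
        = (∑ i ∈ Finset.range k, ((F i).natAbs).factorization) q := by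
          rw [Finset.sum_apply']
      _ = ((m.natAbs ^ l).factorization) q := by rw [← h2, ← h1, h3]
      _ = l * m.natAbs.factorization q := by rw [Nat.factorization_pow]; simp
  have hbig : ∀ q : ℕ, q.Prime →
      (∀ i j, i < k → j < k → (q:ℤ) ∣ F i → (q:ℤ) ∣ F j → i = j) →
      ∀ i, i < k → l ∣ (F i).natAbs.factorization q := by
    intro q hq hu i hi
    by_cases hqi : (q:ℤ) ∣ F i
    · have hone : ∑ j ∈ Finset.range k, (F j).natAbs.factorization q
          = (F i).natAbs.factorization q := by
        apply Finset.sum_eq_single_of_mem i (Finset.mem_range.mpr hi)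
        intro j hj hne
        apply Nat.factorization_eq_zero_of_not_dvd
        intro hdvd
        exact hne (hu j i (Finset.mem_range.mp hj) hi ((dvd_nat_iff q _).mpr hdvd) hqi)
      rw [← hone, hVsum q]
      exact Dvd.intro _ rfl
    · rw [Nat.factorization_eq_zero_of_not_dvd (fun h => hqi ((dvd_nat_iff q _).mpr h))]
      exact dvd_zero l
  have hprime_int := fun (q : ℕ) (hq : q.Prime) => Nat.prime_iff_prime_int.mp hq
  by_cases hpd : (p:ℤ) ∣ d
  · -- Case 1 : p divides d
    have hpF : ∀ i, ¬ (p:ℤ) ∣ F i := fun i h => hqd p hp i h hpd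
    obtain ⟨a1, t1, ht1, he1, hpf1, hQ1, hP1⟩ := decomp l hl2 (F 1) (hFne 1 (by omega))
    obtain ⟨a0, t0, ht0, he0, hpf0, hQ0, hP0⟩ := decomp l hl2 (F 0) (hFne 0 (by omega))
    have ha1 : a1 ≠ 0 := fun h => hFne 1 (by omega) (by rw [he1, h, zero_mul])
    have ha0 : a0 ≠ 0 := fun h => hFne 0 (by omega) (by rw [he0, h, zero_mul])
    have ha1d : a1 ∣ F 1 := ⟨t1 ^ l, he1⟩
    have ha0d : a0 ∣ F 0 := ⟨t0 ^ l, he0⟩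
    have ht1d : t1 ∣ F 1 := (dvd_pow_self t1 (show l ≠ 0 by omega)).trans ⟨a1, by rw [he1]; ring⟩
    have ht0d : t0 ∣ F 0 := (dvd_pow_self t0 (show l ≠ 0 by omega)).trans ⟨a0, by rw [he0]; ring⟩
    have hid : F 1 - F 0 - d ^ l = 0 := by simp [hFdef]
    refine ⟨a1, -a0, -1, t1, t0, d, ha1, neg_ne_zero.mpr ha0, by norm_num,
      ht1.ne', ht0.ne', hd0, by linear_combination hid - he1 + he0, hpf1,
      fun q hq h => hpf0 q hq (dvd_neg.mp h), powfree_small _ (by norm_num)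
        (by simpa using Nat.one_lt_two_pow (show l ≠ 0 by omega)), ?_, ?_, ?_⟩
    · intro q hq hdvd
      by_contra hqk
      push_neg at hqk
      have hu := huniq q hq hqk
      have h1 : ¬ (q:ℤ) ∣ a1 := fun h => hP1 q hq h (hbig q hq hu 1 (by omega))
      have h0 : ¬ (q:ℤ) ∣ a0 := fun h => hP0 q hq h (hbig q hq hu 0 (by omega))
      have hm1 : ¬ (q:ℤ) ∣ (-1 : ℤ) := not_dvd_small _ (by norm_num)
        (by simpa using hq.one_lt)
      rcases (hprime_int q hq).dvd_mul.mp hdvd with h | h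
      · rcases (hprime_int q hq).dvd_mul.mp h with h' | h'
        · exact h1 h'
        · exact h0 (dvd_neg.mp h')
      · exact hm1 h
    · intro hdvd
      have h1 : ¬ (p:ℤ) ∣ a1 := fun h => hpF 1 (h.trans ha1d)
      have h0 : ¬ (p:ℤ) ∣ a0 := fun h => hpF 0 (h.trans ha0d)
      have hm1 : ¬ (p:ℤ) ∣ (-1 : ℤ) := not_dvd_small _ (by norm_num)
        (by simpa using hp.one_lt)
      rcases (hprime_int p hp).dvd_mul.mp hdvd with h | h
      · rcases (hprime_int p hp).dvd_mul.mp h with h' | h'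
        · exact h1 h'
        · exact h0 (dvd_neg.mp h')
      · exact hm1 h
    · exact Or.inr (Or.inr ⟨fun h => hpF 1 (h.trans ht1d), fun h => hpF 0 (h.trans ht0d), hpd⟩)
  · -- Case 2 : p does not divide d
    haveI : Fact p.Prime := ⟨hp⟩
    haveI : NeZero p := ⟨hp.pos.ne'⟩
    have hex : ∃ i, i < k ∧ (p:ℤ) ∣ F i := by
      have hD0 : ((d : ZMod p)) ≠ 0 := by
        rw [Ne, ZMod.intCast_zmod_eq_zero_iff_dvd]; exact hpd
      refine ⟨(-(n : ZMod p) / (d : ZMod p) ^ l).val,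
        lt_of_lt_of_le (ZMod.val_lt _) hp2, ?_⟩
      rw [← ZMod.intCast_zmod_eq_zero_iff_dvd]
      have hcast : ((F ((-(n : ZMod p) / (d : ZMod p) ^ l).val) : ℤ) : ZMod p)
          = (n : ZMod p) + (-(n : ZMod p) / (d : ZMod p) ^ l) * (d : ZMod p) ^ l := by
        simp only [hFdef]
        push_cast
        rw [ZMod.natCast_val, ZMod.cast_id]
      rw [hcast, div_mul_cancel₀ _ (pow_ne_zero l hD0)]
      ring
    set i0 := Nat.find hex with hi0def
    obtain ⟨hi0k, hpi0⟩ : i0 < k ∧ (p:ℤ) ∣ F i0 := Nat.find_spec hex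
    have hmin : ∀ j, j < i0 → ¬ (j < k ∧ (p:ℤ) ∣ F j) := fun j hj => Nat.find_min hex hj
    have hS : ∀ j, j < k → (p:ℤ) ∣ F j → j = i0 ∨ j = i0 + p := by
      intro j hjk hpj
      rcases Nat.lt_trichotomy j i0 with h | h | h
      · exact absurd ⟨hjk, hpj⟩ (hmin j h)
      · exact Or.inl h
      · right
        have hd1 : (p:ℤ) ∣ ((j:ℤ) - i0) := hcong p hp i0 j h hpi0 hpj
        have hd2 : p ∣ (j - i0) := by
          have hc : ((j - i0 : ℕ) : ℤ) = (j:ℤ) - i0 := by omega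
          rw [← hc] at hd1; exact_mod_cast hd1
        obtain ⟨c, hc⟩ := hd2
        have hj2 : j - i0 < 2 * p := by omega
        rw [hc, mul_comm 2 p] at hj2
        have hcc : c < 2 := Nat.lt_of_mul_lt_mul_left hj2
        have hcc0 : c ≠ 0 := by rintro rfl; simp at hc; omega
        have hc1 : c = 1 := by omega
        rw [hc1, mul_one] at hc
        omega
    by_cases hsnd : i0 + p < k ∧ (p:ℤ) ∣ F (i0 + p)
    · -- Case 2b : two indices divisible by p
      obtain ⟨hi1k, hpi1⟩ := hsnd
      have hp2le := hp.two_le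
      have hpj1 : ¬ (p:ℤ) ∣ F (i0 + 1) := by
        intro h; rcases hS (i0+1) (by omega) h with h' | h' <;> omega
      have hpj2 : ¬ (p:ℤ) ∣ F (i0 + (p - 1)) := by
        intro h; rcases hS (i0+(p-1)) (by omega) h with h' | h' <;> omega
      have hZ1ne : F i0 * F (i0 + p) ≠ 0 := mul_ne_zero (hFne _ hi0k) (hFne _ hi1k)
      have hZ2ne : F (i0+1) * F (i0+(p-1)) ≠ 0 :=
        mul_ne_zero (hFne _ (by omega)) (hFne _ (by omega))
      obtain ⟨A, T, hT, heA, hpfA, hQA, hPA⟩ := decomp l hl2 _ hZ1ne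
      obtain ⟨B, Sx, hSx, heB, hpfB, hQB, hPB⟩ := decomp l hl2 _ hZ2ne
      have hVmul : ∀ (x y : ℤ) (q : ℕ), x ≠ 0 → y ≠ 0 →
          (x*y).natAbs.factorization q
            = x.natAbs.factorization q + y.natAbs.factorization q := by
        intro x y q hx hy
        rw [Int.natAbs_mul, Nat.factorization_mul (by simpa using hx) (by simpa using hy)]
        simp
      have hVsump : ∑ i ∈ Finset.range k, (F i).natAbs.factorization p
          = (F i0).natAbs.factorization p + (F (i0+p)).natAbs.factorization p := by
        have hsub : ({i0, i0 + p} : Finset ℕ) ⊆ Finset.range k := by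
          intro x hx
          simp only [Finset.mem_insert, Finset.mem_singleton] at hx
          rcases hx with rfl | rfl
          · exact Finset.mem_range.mpr hi0k
          · exact Finset.mem_range.mpr hi1k
        have hzero : ∀ x ∈ Finset.range k, x ∉ ({i0, i0 + p} : Finset ℕ) →
            (F x).natAbs.factorization p = 0 := by
          intro x hxk hxs
          simp only [Finset.mem_insert, Finset.mem_singleton] at hxs
          push_neg at hxs
          apply Nat.factorization_eq_zero_of_not_dvd
          intro hdvd
          rcases hS x (Finset.mem_range.mp hxk) ((dvd_nat_iff p _).mpr hdvd) with h | h
          · exact hxs.1 h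
          · exact hxs.2 h
        rw [← Finset.sum_subset hsub hzero, Finset.sum_pair (show i0 ≠ i0 + p by omega)]
      have hlVp : l ∣ (F i0 * F (i0+p)).natAbs.factorization p := by
        rw [hVmul _ _ p (hFne _ hi0k) (hFne _ hi1k), ← hVsump, hVsum p]
        exact Dvd.intro _ rfl
      have hlVq1 : ∀ q : ℕ, q.Prime → k < q →
          l ∣ (F i0 * F (i0+p)).natAbs.factorization q := by
        intro q hq hkq
        rw [hVmul _ _ q (hFne _ hi0k) (hFne _ hi1k)]
        exact Nat.dvd_add (hbig q hq (huniq q hq hkq) i0 hi0k)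
          (hbig q hq (huniq q hq hkq) (i0+p) hi1k)
      have hlVq2 : ∀ q : ℕ, q.Prime → k < q →
          l ∣ (F (i0+1) * F (i0+(p-1))).natAbs.factorization q := by
        intro q hq hkq
        rw [hVmul _ _ q (hFne _ (by omega)) (hFne _ (by omega))]
        exact Nat.dvd_add (hbig q hq (huniq q hq hkq) (i0+1) (by omega))
          (hbig q hq (huniq q hq hkq) (i0+(p-1)) (by omega))
      have hA0 : A ≠ 0 := fun h => hZ1ne (by rw [heA, h, zero_mul])
      have hB0 : B ≠ 0 := fun h => hZ2ne (by rw [heB, h, zero_mul])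
      have hBd : B ∣ F (i0+1) * F (i0+(p-1)) := ⟨Sx ^ l, heB⟩
      have hSxd : Sx ∣ F (i0+1) * F (i0+(p-1)) :=
        (dvd_pow_self Sx (show l ≠ 0 by omega)).trans ⟨B, by rw [heB]; ring⟩
      have hpZ2 : ¬ (p:ℤ) ∣ F (i0+1) * F (i0+(p-1)) := by
        intro h
        rcases (hprime_int p hp).dvd_mul.mp h with h' | h'
        · exact hpj1 h'
        · exact hpj2 h'
      have hcna : (((p:ℕ):ℤ) - 1).natAbs = p - 1 := by omega
      have hcne : ((p:ℕ):ℤ) - 1 ≠ 0 := by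
        intro h
        have : ((p:ℕ):ℤ) = 1 := by omega
        omega
      have hid : F i0 * F (i0+p) - F (i0+1) * F (i0+(p-1))
          + (((p:ℕ):ℤ) - 1) * (d^2) ^ l = 0 := by
        have h1p : ((p - 1 : ℕ) : ℤ) = (p:ℤ) - 1 := by omega
        simp only [hFdef]
        push_cast [h1p]
        ring
      have hpT : (p:ℤ) ∣ T := by
        apply hQA p hp
        rw [dvd_pow_nat_iff]
        apply (Nat.Prime.pow_dvd_iff_le_factorization hp (by simpa using hZ1ne)).mpr
        have hpos : 0 < (F i0 * F (i0+p)).natAbs.factorization p :=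
          hp.factorization_pos_of_dvd (by simpa using hZ1ne)
            ((dvd_nat_iff p _).mp (dvd_mul_of_dvd_left hpi0 _))
        exact Nat.le_of_dvd hpos hlVp
      refine ⟨A, -B, ((p:ℕ):ℤ) - 1, T, Sx, d^2, hA0, neg_ne_zero.mpr hB0, hcne,
        hT.ne', hSx.ne', pow_ne_zero 2 hd0, by linear_combination hid - heA + heB,
        hpfA, fun q hq h => hpfB q hq (dvd_neg.mp h),
        powfree_small _ hcne (by rw [hcna]; have := Nat.lt_two_pow_self (n := l); omega),
        ?_, ?_, ?_⟩
      · intro q hq hdvd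
        by_contra hqk
        push_neg at hqk
        have h1 : ¬ (q:ℤ) ∣ A := fun h => hPA q hq h (hlVq1 q hq hqk)
        have h2 : ¬ (q:ℤ) ∣ B := fun h => hPB q hq h (hlVq2 q hq hqk)
        have h3 : ¬ (q:ℤ) ∣ ((p:ℕ):ℤ) - 1 := not_dvd_small _ hcne (by omega)
        rcases (hprime_int q hq).dvd_mul.mp hdvd with h | h
        · rcases (hprime_int q hq).dvd_mul.mp h with h' | h'
          · exact h1 h'
          · exact h2 (dvd_neg.mp h')
        · exact h3 h
      · intro hdvd
        have h1 : ¬ (p:ℤ) ∣ A := fun h => hPA p hp h hlVp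
        have h2 : ¬ (p:ℤ) ∣ B := fun h => hpZ2 (h.trans hBd)
        have h3 : ¬ (p:ℤ) ∣ ((p:ℕ):ℤ) - 1 := not_dvd_small _ hcne (by omega)
        rcases (hprime_int p hp).dvd_mul.mp hdvd with h | h
        · rcases (hprime_int p hp).dvd_mul.mp h with h' | h'
          · exact h1 h'
          · exact h2 (dvd_neg.mp h')
        · exact h3 h
      · refine Or.inl ⟨hpT, fun h => hpZ2 (h.trans hSxd), fun h => hpd ?_⟩
        exact (hprime_int p hp).dvd_of_dvd_pow h
    · -- Case 2a : exactly one index divisible by p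
      have hni : ∀ j, j < k → (p:ℤ) ∣ F j → j = i0 := by
        intro j hjk hpj
        rcases hS j hjk hpj with h | h
        · exact h
        · exact absurd ⟨h ▸ hjk, h ▸ hpj⟩ hsnd
      have hu : ∀ i j, i < k → j < k → (p:ℤ) ∣ F i → (p:ℤ) ∣ F j → i = j := by
        intro i j hi hj hfi hfj
        rw [hni i hi hfi, hni j hj hfj]
      have hlV : l ∣ (F i0).natAbs.factorization p := hbig p hp hu i0 hi0k
      set j := if i0 = 0 then 1 else i0 - 1 with hjdef
      have hjk : j < k := by rw [hjdef]; split <;> omega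
      have hji : j ≠ i0 := by rw [hjdef]; split <;> omega
      have hjpm : j = i0 + 1 ∨ i0 = j + 1 := by rw [hjdef]; split <;> omega
      have hpj : ¬ (p:ℤ) ∣ F j := fun h => hji (hni j hjk h)
      obtain ⟨aa, tt, htt, hea, hpfa, hQa, hPa⟩ := decomp l hl2 (F i0) (hFne i0 hi0k)
      obtain ⟨ab, tb, htb, heb, hpfb, hQb, hPb⟩ := decomp l hl2 (F j) (hFne j hjk)
      have haa0 : aa ≠ 0 := fun h => hFne i0 hi0k (by rw [hea, h, zero_mul])
      have hab0 : ab ≠ 0 := fun h => hFne j hjk (by rw [heb, h, zero_mul])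
      have habd : ab ∣ F j := ⟨tb ^ l, heb⟩
      have htbd : tb ∣ F j := (dvd_pow_self tb (show l ≠ 0 by omega)).trans
        ⟨ab, by rw [heb]; ring⟩
      have hcval : ((j:ℤ) - (i0:ℤ)) = 1 ∨ ((j:ℤ) - (i0:ℤ)) = -1 := by omega
      have hcne : ((j:ℤ) - (i0:ℤ)) ≠ 0 := by omega
      have hcna : ((j:ℤ) - (i0:ℤ)).natAbs = 1 := by
        rcases hcval with h | h <;> rw [h] <;> rfl
      have hid : F i0 - F j - (((i0:ℤ) - (j:ℤ))) * d ^ l = 0 := by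
        simp only [hFdef]; ring
      have hpt : (p:ℤ) ∣ tt := by
        apply hQa p hp
        rw [dvd_pow_nat_iff]
        apply (Nat.Prime.pow_dvd_iff_le_factorization hp (by simpa using hFne i0 hi0k)).mpr
        have hpos : 0 < (F i0).natAbs.factorization p :=
          hp.factorization_pos_of_dvd (by simpa using hFne i0 hi0k)
            ((dvd_nat_iff p _).mp hpi0)
        exact Nat.le_of_dvd hpos hlV
      refine ⟨aa, -ab, (j:ℤ) - (i0:ℤ), tt, tb, d, haa0, neg_ne_zero.mpr hab0, hcne,
        htt.ne', htb.ne', hd0, by linear_combination hid - hea + heb,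
        hpfa, fun q hq h => hpfb q hq (dvd_neg.mp h),
        powfree_small _ hcne (by rw [hcna]; have := Nat.lt_two_pow_self (n := l); omega),
        ?_, ?_, ?_⟩
      · intro q hq hdvd
        by_contra hqk
        push_neg at hqk
        have h1 : ¬ (q:ℤ) ∣ aa := fun h => hPa q hq h (hbig q hq (huniq q hq hqk) i0 hi0k)
        have h2 : ¬ (q:ℤ) ∣ ab := fun h => hPb q hq h (hbig q hq (huniq q hq hqk) j hjk)
        have h3 : ¬ (q:ℤ) ∣ (j:ℤ) - (i0:ℤ) := not_dvd_small _ hcne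
          (by rw [hcna]; exact hq.one_lt)
        rcases (hprime_int q hq).dvd_mul.mp hdvd with h | h
        · rcases (hprime_int q hq).dvd_mul.mp h with h' | h'
          · exact h1 h'
          · exact h2 (dvd_neg.mp h')
        · exact h3 h
      · intro hdvd
        have h1 : ¬ (p:ℤ) ∣ aa := fun h => hPa p hp h hlV
        have h2 : ¬ (p:ℤ) ∣ ab := fun h => hpj (h.trans habd)
        have h3 : ¬ (p:ℤ) ∣ (j:ℤ) - (i0:ℤ) := not_dvd_small _ hcne
          (by rw [hcna]; exact hp.one_lt)
        rcases (hprime_int p hp).dvd_mul.mp hdvd with h | h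
        · rcases (hprime_int p hp).dvd_mul.mp h with h' | h'
          · exact h1 h'
          · exact h2 (dvd_neg.mp h')
        · exact h3 h
      · exact Or.inl ⟨hpt, fun h => hpj (h.trans htbd), fun h => hpd h⟩
end

section
/- Let k ≥ 2 be an integer and ℓ > k a prime. If the equation x(x+1)(x+2)⋯(x+k−1) = y^ℓ has a solution in rational numbers x, y with y ≠ 0, then there exist integers n, m, d with m ≠ 0, d ≥ 1, gcd(n, d) = 1, gcd(m, d) = 1, and n(n + d^ℓ)(n + 2d^ℓ)⋯(n + (k−1)d^ℓ) = m^ℓ. -/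
lemma pow_helper {s t k l : ℕ} (hs : s ≠ 0) (hco : Nat.Coprime l k)
    (h : s ^ k = t ^ l) : ∃ d, s = d ^ l := by
  have hdvd : ∀ p, l ∣ s.factorization p := by
    intro p
    have h2 := congrArg (fun f : ℕ →₀ ℕ => f p) (congrArg Nat.factorization h)
    simp only [Nat.factorization_pow, Finsupp.smul_apply, smul_eq_mul] at h2
    exact hco.dvd_of_dvd_mul_left ⟨t.factorization p, by linarith [h2]⟩
  refine ⟨s.factorization.prod fun p e => p ^ (e / l), ?_⟩
  have key : (s.factorization.prod fun p e => p ^ (e / l)) ^ l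
      = s.factorization.prod fun p e => p ^ e := by
    rw [Finsupp.prod, Finsupp.prod, ← Finset.prod_pow]
    exact Finset.prod_congr rfl fun p _ => by
      rw [← pow_mul, Nat.div_mul_cancel (hdvd p)]
  rw [key, Nat.factorization_prod_pow_eq_self hs]

theorem stmt_13 (k : ℕ) (hk : 2 ≤ k) (l : ℕ) (hl : l.Prime) (hkl : k < l)
    (x y : ℚ) (hy : y ≠ 0)
    (h : ∏ i ∈ Finset.range k, (x + (i : ℚ)) = y ^ l) :
    ∃ n m d : ℤ, m ≠ 0 ∧ 1 ≤ d ∧ IsCoprime n d ∧ IsCoprime m d ∧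
      ∏ i ∈ Finset.range k, (n + (i : ℤ) * d ^ l) = m ^ l := by
  have hl0 : l ≠ 0 := hl.pos.ne'
  set n : ℤ := x.num with hn
  set s : ℕ := x.den with hsdef
  have hsnz : s ≠ 0 := x.pos.ne'
  have hs0 : (0 : ℤ) < (s : ℤ) := Int.natCast_pos.mpr x.pos
  have hcop : IsCoprime n (s : ℤ) := by
    rw [Int.isCoprime_iff_gcd_eq_one]
    exact x.reduced
  have hsne : (s : ℚ) ≠ 0 := by positivity
  have hx : ∀ i : ℕ, x + (i : ℚ) = ((n + (i : ℤ) * s : ℤ) : ℚ) / (s : ℚ) := by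
    intro i
    rw [eq_div_iff hsne]
    push_cast
    rw [add_mul]
    congr 1
    rw [hn, hsdef, Rat.mul_den_eq_num]
  set A : ℤ := ∏ i ∈ Finset.range k, (n + (i : ℤ) * s) with hA
  have hprod : ∏ i ∈ Finset.range k, (x + (i : ℚ)) = (A : ℚ) / (((s : ℤ) ^ k : ℤ) : ℚ) := by
    rw [Finset.prod_congr rfl fun i _ => hx i, Finset.prod_div_distrib,
        Finset.prod_const, Finset.card_range, hA]
    push_cast
    ring
  have hcopA : IsCoprime A ((s : ℤ) ^ k) := by
    apply IsCoprime.pow_right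
    apply IsCoprime.prod_left
    intro i _
    have := hcop.add_mul_left_left (i : ℤ)
    rwa [mul_comm (s : ℤ) (i : ℤ)] at this
  have hcopnat : Nat.Coprime A.natAbs ((s : ℤ) ^ k).natAbs :=
    Int.isCoprime_iff_gcd_eq_one.mp hcopA
  have hbpos : (0 : ℤ) < (s : ℤ) ^ k := pow_pos hs0 k
  have hnum : (y ^ l).num = A := by
    rw [← h, hprod, Rat.num_div_eq_of_coprime hbpos hcopnat]
  have hden : ((y ^ l).den : ℤ) = (s : ℤ) ^ k := by
    rw [← h, hprod, Rat.den_div_eq_of_coprime hbpos hcopnat]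
  have hnum' : y.num ^ l = A := by rw [← hnum, Rat.num_pow]
  have hden' : s ^ k = y.den ^ l := by
    have h2 : ((s ^ k : ℕ) : ℤ) = ((y.den ^ l : ℕ) : ℤ) := by
      push_cast
      rw [← hden, Rat.den_pow]
      push_cast
      ring
    exact Nat.cast_injective h2
  have hcokl : Nat.Coprime l k :=
    (Nat.Prime.coprime_iff_not_dvd hl).mpr
      (fun hd => absurd (Nat.le_of_dvd (by omega) hd) (by omega))
  obtain ⟨d0, hd0⟩ := pow_helper hsnz hcokl hden'
  have hd0nz : d0 ≠ 0 := by
    rintro rfl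
    simp [zero_pow hl0] at hd0
    exact hsnz hd0
  have hsd : ((s : ℤ)) = (d0 : ℤ) ^ l := by exact_mod_cast congrArg (Nat.cast : ℕ → ℤ) hd0
  have htd : y.den = d0 ^ k :=
    Nat.pow_left_injective hl0 (show y.den ^ l = (d0 ^ k) ^ l by
      rw [← hden', hd0, ← pow_mul, ← pow_mul, Nat.mul_comm])
  refine ⟨n, y.num, (d0 : ℤ), Rat.num_ne_zero.mpr hy, ?_, ?_, ?_, ?_⟩
  · exact_mod_cast Nat.one_le_iff_ne_zero.mpr hd0nz
  · apply hcop.of_isCoprime_of_dvd_right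
    rw [hsd]
    exact dvd_pow_self _ hl0
  · have hcopy : IsCoprime y.num ((y.den : ℕ) : ℤ) := by
      rw [Int.isCoprime_iff_gcd_eq_one]
      exact y.reduced
    apply hcopy.of_isCoprime_of_dvd_right
    rw [htd]
    push_cast
    exact dvd_pow_self _ (by omega)
  · calc ∏ i ∈ Finset.range k, (n + (i : ℤ) * (d0 : ℤ) ^ l)
        = A := Finset.prod_congr rfl fun i _ => by rw [← hsd]
      _ = y.num ^ l := hnum'.symm
end

section
/- Let k ≥ 35 and p a prime with k/2 < p ≤ k. Set N' = 2⁴·∏_{q ≤ k, q prime, q ≠ p, q odd} q. Then (N' + 1)/6 · log(√p + 1) < 3^k, assuming the bound ∑_{q ≤ k prime} log q < 1.000081·k. -/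
-- exp of a small positive number: exp x ≤ 1/(1-x)
lemma aux_exp_small : Real.exp (0.000081 : ℝ) ≤ 1.0000811 := by
  have h := Real.add_one_le_exp (-0.000081 : ℝ)
  have hpos := Real.exp_pos (0.000081 : ℝ)
  have hmul : Real.exp (0.000081 : ℝ) * Real.exp (-0.000081 : ℝ) = 1 := by
    rw [← Real.exp_add]; norm_num
  nlinarith [Real.exp_pos (-0.000081 : ℝ)]

lemma aux_exp_c : Real.exp (1.000081 : ℝ) < 2.718503 := by
  have h1 : Real.exp (1.000081 : ℝ) = Real.exp 1 * Real.exp (0.000081 : ℝ) := by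
    rw [← Real.exp_add]; norm_num
  have h2 := Real.exp_one_lt_d9
  have h3 := aux_exp_small
  have h4 := Real.exp_pos (0.000081 : ℝ)
  nlinarith

lemma aux_key : ∀ k : ℕ, 35 ≤ k → 3 * Real.sqrt k * (2.718503 : ℝ) ^ k < 3 ^ k := by
  intro k hk
  induction k, hk using Nat.le_induction with
  | base =>
    have hs : Real.sqrt 35 ≤ 6 := by
      rw [show (6 : ℝ) = Real.sqrt 36 by
        rw [show (36 : ℝ) = 6 ^ 2 by norm_num, Real.sqrt_sq (by norm_num)]]
      exact Real.sqrt_le_sqrt (by norm_num)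
    have hE : (0:ℝ) < (2.718503 : ℝ) ^ 35 := by positivity
    calc 3 * Real.sqrt 35 * (2.718503 : ℝ) ^ 35 ≤ 18 * (2.718503 : ℝ) ^ 35 := by nlinarith
      _ < 3 ^ 35 := by norm_num
  | succ k hk ih =>
    have hs : Real.sqrt (k + 1) ≤ 1.1 * Real.sqrt k := by
      have h1 : ((k : ℝ) + 1) ≤ 1.21 * k := by
        have : (35 : ℝ) ≤ k := by exact_mod_cast hk
        nlinarith
      calc Real.sqrt (k + 1) ≤ Real.sqrt (1.21 * k) := Real.sqrt_le_sqrt h1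
        _ = Real.sqrt 1.21 * Real.sqrt k := Real.sqrt_mul (by norm_num) _
        _ = 1.1 * Real.sqrt k := by
            rw [show (1.21 : ℝ) = 1.1 ^ 2 by norm_num, Real.sqrt_sq (by norm_num)]
    have hEk : (0:ℝ) < (2.718503 : ℝ) ^ k := by positivity
    have hsk : (0:ℝ) ≤ Real.sqrt k := Real.sqrt_nonneg _
    have hcast : ((k : ℝ) + 1) = ((k + 1 : ℕ) : ℝ) := by push_cast; ring
    calc 3 * Real.sqrt (k + 1 : ℕ) * (2.718503 : ℝ) ^ (k + 1)
        ≤ 3 * (1.1 * Real.sqrt k) * ((2.718503 : ℝ) ^ k * 2.718503) := by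
          rw [pow_succ]
          have hs' : Real.sqrt ((k + 1 : ℕ) : ℝ) ≤ 1.1 * Real.sqrt k := by
            push_cast; exact hs
          have hE2 : (0:ℝ) ≤ (2.718503 : ℝ) ^ k * 2.718503 := by positivity
          nlinarith [hs', Real.sqrt_nonneg ((k+1:ℕ):ℝ)]
      _ = (1.1 * 2.718503) * (3 * Real.sqrt k * (2.718503 : ℝ) ^ k) := by ring
      _ < (1.1 * 2.718503) * 3 ^ k := by
          apply mul_lt_mul_of_pos_left ih; norm_num
      _ ≤ 3 ^ (k + 1) := by
          rw [pow_succ]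
          have : (0:ℝ) < 3 ^ k := by positivity
          nlinarith

theorem stmt_19 (k p : ℕ) (hk : 35 ≤ k) (hp : p.Prime) (hp1 : k < 2 * p) (hp2 : p ≤ k)
    (htheta : ∑ q ∈ (Finset.range (k + 1)).filter Nat.Prime, Real.log q < 1.000081 * k) :
    letI N' : ℕ := 2 ^ 4 *
      ∏ q ∈ (Finset.range (k + 1)).filter (fun q => Nat.Prime q ∧ q ≠ p ∧ Odd q), q
    ((N' : ℝ) + 1) / 6 * Real.log (Real.sqrt p + 1) < 3 ^ k := by
  set S := (Finset.range (k + 1)).filter (fun q => Nat.Prime q ∧ q ≠ p ∧ Odd q) with hS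
  set N' : ℕ := 2 ^ 4 * ∏ q ∈ S, q with hN'
  set X := Real.exp (1.000081 * k) with hX
  -- product bound
  have hsub : S ⊆ (Finset.range (k + 1)).filter Nat.Prime := by
    intro q hq
    simp only [hS, Finset.mem_filter] at hq ⊢
    exact ⟨hq.1, hq.2.1⟩
  have hprod : (∏ q ∈ S, (q : ℝ)) ≤ X := by
    have h1 : ∏ q ∈ S, (q : ℝ) = Real.exp (∑ q ∈ S, Real.log q) := by
      rw [Real.exp_sum]
      refine Finset.prod_congr rfl (fun q hq => ?_)
      have hq' : Nat.Prime q := ((Finset.mem_filter.mp hq).2).1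
      rw [Real.exp_log (by exact_mod_cast hq'.pos)]
    have h2 : ∑ q ∈ S, Real.log q ≤ ∑ q ∈ (Finset.range (k + 1)).filter Nat.Prime, Real.log q := by
      refine Finset.sum_le_sum_of_subset_of_nonneg hsub (fun q hq _ => ?_)
      have hq' : Nat.Prime q := (Finset.mem_filter.mp hq).2
      exact Real.log_nonneg (by exact_mod_cast hq'.one_lt.le)
    rw [h1]
    exact Real.exp_le_exp.mpr (le_of_lt (lt_of_le_of_lt h2 htheta))
  have hX1 : (1 : ℝ) ≤ X := by
    rw [hX]
    apply Real.one_le_exp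
    positivity
  have hN : (N' : ℝ) + 1 ≤ 17 * X := by
    have : (N' : ℝ) = 16 * ∏ q ∈ S, (q : ℝ) := by
      rw [hN']
      push_cast
      ring
    nlinarith
  -- log bound
  have hlog0 : (0 : ℝ) ≤ Real.log (Real.sqrt p + 1) :=
    Real.log_nonneg (by nlinarith [Real.sqrt_nonneg (p : ℝ)])
  have hlog : Real.log (Real.sqrt p + 1) ≤ Real.sqrt k := by
    have h1 : Real.log (Real.sqrt p + 1) ≤ Real.sqrt p := by
      have := Real.log_le_sub_one_of_pos
        (show (0:ℝ) < Real.sqrt p + 1 by positivity)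
      linarith
    have h2 : Real.sqrt (p : ℝ) ≤ Real.sqrt (k : ℝ) :=
      Real.sqrt_le_sqrt (by exact_mod_cast hp2)
    linarith
  -- combine
  have hXpos : (0 : ℝ) < X := Real.exp_pos _
  have hmain : ((N' : ℝ) + 1) / 6 * Real.log (Real.sqrt p + 1) ≤ 3 * Real.sqrt k * X := by
    have hA : ((N' : ℝ) + 1) / 6 ≤ 3 * X := by nlinarith
    have hA0 : (0 : ℝ) ≤ ((N' : ℝ) + 1) / 6 := by positivity
    calc ((N' : ℝ) + 1) / 6 * Real.log (Real.sqrt p + 1)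
        ≤ (3 * X) * Real.sqrt k := mul_le_mul hA hlog hlog0 (by positivity)
      _ = 3 * Real.sqrt k * X := by ring
  have hXE : X ≤ (2.718503 : ℝ) ^ k := by
    rw [hX, mul_comm, Real.exp_nat_mul]
    exact pow_le_pow_left₀ (Real.exp_pos _).le aux_exp_c.le k
  calc ((N' : ℝ) + 1) / 6 * Real.log (Real.sqrt p + 1)
      ≤ 3 * Real.sqrt k * X := hmain
    _ ≤ 3 * Real.sqrt k * (2.718503 : ℝ) ^ k := by
        have := Real.sqrt_nonneg (k : ℝ); nlinarith
    _ < 3 ^ k := aux_key k hk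
end
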